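/- arXiv:2309.01220 — 2 statements merged into one kernel-verified Lean document; each statement's English description precedes it below -/
import Mathlib

section
/- Suppose f is analytic and satisfies |f(λ)| ≤ M on the annulus r^{-1} < |λ| < r for some r > 1. Let a_j be the j-th Taylor coefficient of f at 0 and let a_j^{[m]} = (1/m) Σ_{k=1}^m f(z_k) z_k^{-j} with z_k = e^{2πik/m} be its trapezoidal-rule approximation. Then |a_j^{[m]} − a_j| ≤ M (r^j + r^{-j}) / (r^m − 1). -/
open Metric Real Complex Polynomial Finset MeasureTheory

lemma aux_prod (m : ℕ) (hm : 0 < m) (z : ℂ) :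
    z^m - 1 = ∏ k ∈ Finset.range m, (z - (Complex.exp (2*π*Complex.I/m))^(k+1)) := by
  have hζ := Complex.isPrimitiveRoot_exp m hm.ne'
  have h := X_pow_sub_C_eq_prod hζ hm (hζ.pow_eq_one)
  have := congrArg (Polynomial.eval z) h
  simpa [Polynomial.eval_prod, pow_succ] using this

lemma aux_abs_zk (m : ℕ) (k : ℕ) : ‖(Complex.exp (2*π*Complex.I/m))^(k+1)‖ = 1 := by
  rw [norm_pow]
  have : (2*(π:ℂ)*Complex.I/m) = ((2*π/m : ℝ) : ℂ) * Complex.I := by push_cast; ring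
  rw [this, Complex.norm_exp_ofReal_mul_I, one_pow]

lemma aux_deriv_sum (m : ℕ) (hm : 0 < m) (z : ℂ) :
    ∑ k ∈ Finset.range m, ∏ l ∈ (Finset.range m).erase k,
        (z - (Complex.exp (2*π*Complex.I/m))^(l+1)) = m * z^(m-1) := by
  set ζ := Complex.exp (2*π*Complex.I/m)
  have h1 : HasDerivAt (fun w : ℂ => ∏ k ∈ Finset.range m, (w - ζ^(k+1)))
      (∑ k ∈ Finset.range m, (∏ l ∈ (Finset.range m).erase k, (z - ζ^(l+1))) • (1:ℂ)) z :=
    HasDerivAt.fun_finsetProd (fun i _ => (hasDerivAt_id z).sub_const _)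
  have h2 : HasDerivAt (fun w : ℂ => ∏ k ∈ Finset.range m, (w - ζ^(k+1)))
      (m * z^(m-1)) z := by
    have : HasDerivAt (fun w : ℂ => w^m - 1) (m * z^(m-1)) z :=
      (hasDerivAt_pow m z).sub_const 1
    refine this.congr_of_eventuallyEq (Filter.Eventually.of_forall fun w => ?_)
    exact (aux_prod m hm w).symm
  have := h1.unique h2
  simpa using this

lemma aux_sum_inv (m : ℕ) (hm : 0 < m) (z : ℂ) (hz : ‖z‖ ≠ 1) :
    ∑ k ∈ Finset.range m, (z - (Complex.exp (2*π*Complex.I/m))^(k+1))⁻¹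
      = m * z^(m-1) / (z^m - 1) := by
  set ζ := Complex.exp (2*π*Complex.I/m) with hζdef
  have hne : ∀ k, z - ζ^(k+1) ≠ 0 := by
    intro k
    rw [sub_ne_zero]
    intro h
    exact hz (by rw [h, aux_abs_zk])
  have hprod := aux_prod m hm z
  have hP : z^m - 1 ≠ 0 := by
    rw [hprod]
    exact Finset.prod_ne_zero_iff.2 fun k _ => hne k
  rw [eq_div_iff hP, ← aux_deriv_sum m hm z, Finset.sum_mul]
  refine Finset.sum_congr rfl fun k hk => ?_
  rw [hprod, ← Finset.mul_prod_erase _ _ hk, ← hζdef,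
    inv_mul_cancel_left₀ (hne k)]

lemma aux_integral_finset_sum {ι : Type*} (s : Finset ι) (F : ι → ℂ → ℂ) (c : ℂ) (R : ℝ)
    (h : ∀ i ∈ s, CircleIntegrable (F i) c R) :
    (∮ z in C(c, R), ∑ i ∈ s, F i z) = ∑ i ∈ s, ∮ z in C(c, R), F i z := by
  simp only [circleIntegral, smul_sum]
  exact intervalIntegral.integral_finset_sum fun i hi => (h i hi).out

lemma aux_circleIntegral_add {f g : ℂ → ℂ} {c : ℂ} {R : ℝ} (hf : CircleIntegrable f c R)
    (hg : CircleIntegrable g c R) :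
    (∮ z in C(c, R), (f z + g z)) = (∮ z in C(c, R), f z) + ∮ z in C(c, R), g z := by
  simp only [circleIntegral, smul_add]
  exact intervalIntegral.integral_add hf.out hg.out

lemma aux_two_circle (g : ℂ → ℂ) (U : Set ℂ) (hU : IsOpen U) (hg : DifferentiableOn ℂ g U)
    (ρ R : ℝ) (hρ : 0 < ρ) (hρR : ρ < R)
    (hsub : (Metric.closedBall (0:ℂ) R \ Metric.ball 0 ρ) ⊆ U)
    (w : ℂ) (hw1 : ρ < ‖w‖) (hw2 : ‖w‖ < R) :
    (∮ z in C(0, R), (z - w)⁻¹ * g z) - (∮ z in C(0, ρ), (z - w)⁻¹ * g z)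
      = 2 * π * Complex.I * g w := by
  have hR : (0:ℝ) < R := hρ.trans hρR
  have hwU : w ∈ U := hsub ⟨by simpa using hw2.le, by simpa using hw1.not_gt⟩
  set d := dslope g w with hd_def
  have hd : DifferentiableOn ℂ d U :=
    (Complex.differentiableOn_dslope (hU.mem_nhds hwU)).mpr hg
  have hsphR : sphere (0:ℂ) R ⊆ U := fun z hz => hsub (by
    simp only [mem_sphere_iff_norm, sub_zero] at hz
    exact ⟨by simpa [Metric.mem_closedBall, dist_zero_right] using hz.le,
      by simp [Metric.mem_ball, dist_zero_right, hz, hρR.not_gt]⟩)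
  have hsphρ : sphere (0:ℂ) ρ ⊆ U := fun z hz => hsub (by
    simp only [mem_sphere_iff_norm, sub_zero] at hz
    exact ⟨by simpa [Metric.mem_closedBall, dist_zero_right] using hz.le.trans hρR.le,
      by simp [Metric.mem_ball, dist_zero_right, hz]⟩)
  have hdef : (∮ z in C(0, R), d z) = ∮ z in C(0, ρ), d z := by
    refine Complex.circleIntegral_eq_of_differentiable_on_annulus_off_countable hρ hρR.le
      Set.countable_empty (hd.continuousOn.mono hsub) fun z hz => ?_
    exact hd.differentiableAt (hU.mem_nhds (hsub
      ⟨Metric.ball_subset_closedBall hz.1.1, fun h => hz.1.2 (Metric.ball_subset_closedBall h)⟩))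
  have key : ∀ z : ℂ, z ≠ w → (z - w)⁻¹ * g z = d z + (z - w)⁻¹ * g w := by
    intro z hz
    rw [hd_def, dslope_of_ne _ hz, slope_def_field]
    field_simp [sub_ne_zero.2 hz]
    ring
  have hne_sph : ∀ {t : ℝ}, ‖w‖ ≠ t → ∀ z ∈ sphere (0:ℂ) t, z ≠ w := by
    intro t ht z hz h
    subst h
    simp only [mem_sphere_iff_norm, sub_zero] at hz
    exact ht (by rw [hz])
  have hinvc : ∀ t : ℝ, ‖w‖ ≠ t →
      ContinuousOn (fun z : ℂ => (z - w)⁻¹) (sphere (0:ℂ) t) := fun t ht =>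
    ContinuousOn.inv₀ (by fun_prop) fun z hz => sub_ne_zero.2 (hne_sph ht z hz)
  have habs_R : ‖w‖ ≠ R := hw2.ne
  have habs_ρ : ‖w‖ ≠ ρ := hw1.ne'
  -- split both integrals
  have split : ∀ t : ℝ, 0 < t → (htw : ‖w‖ ≠ t) → (hsph : sphere (0:ℂ) t ⊆ U) →
      (∮ z in C(0, t), (z - w)⁻¹ * g z)
        = (∮ z in C(0, t), d z) + (∮ z in C(0, t), (z - w)⁻¹) * g w := by
    intro t ht htw hsph
    have h1 : (∮ z in C(0, t), (z - w)⁻¹ * g z)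
        = ∮ z in C(0, t), (d z + (z - w)⁻¹ * g w) :=
      circleIntegral.integral_congr ht.le fun z hz => key z (hne_sph htw z hz)
    rw [h1, aux_circleIntegral_add (f := d) (g := fun z => (z - w)⁻¹ * g w)
      (ContinuousOn.circleIntegrable ht.le ((hd.continuousOn).mono hsph))
      (ContinuousOn.circleIntegrable ht.le ((hinvc t htw).mul continuousOn_const))]
    congr 1
    simpa using circleIntegral.integral_smul_const (fun z => (z - w)⁻¹) (g w) 0 t
  have hIR : (∮ z in C(0, R), (z - w)⁻¹) = 2 * π * Complex.I :=
    circleIntegral.integral_sub_inv_of_mem_ball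
      (by simpa [Metric.mem_ball, dist_zero_right] using hw2)
  have hIρ : (∮ z in C(0, ρ), (z - w)⁻¹) = 0 := by
    refine Complex.circleIntegral_eq_zero_of_differentiable_on_off_countable hρ.le
      Set.countable_empty ?_ fun z hz => ?_
    · refine ContinuousOn.inv₀ (by fun_prop) fun z hz => sub_ne_zero.2 fun h => ?_
      rw [Metric.mem_closedBall, dist_zero_right, h] at hz
      exact absurd hz hw1.not_ge
    · refine (differentiableAt_id.sub_const w).inv (sub_ne_zero.2 fun h => ?_)
      simp only [id] at h
      have := hz.1
      rw [Metric.mem_ball, dist_zero_right, h] at this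
      exact absurd this hw1.asymm
  rw [split R hR habs_R hsphR, split ρ hρ habs_ρ hsphρ, hIR, hIρ, hdef]
  ring

lemma aux_key (f : ℂ → ℂ) (r M : ℝ) (hr : 1 < r)
    (hf : DifferentiableOn ℂ f {z : ℂ | r⁻¹ < ‖z‖ ∧ ‖z‖ < r})
    (hM : ∀ z : ℂ, r⁻¹ < ‖z‖ → ‖z‖ < r → ‖f z‖ ≤ M)
    (j m : ℕ) (hm : 0 < m)
    (a : ℂ)
    (haj : a = (2 * π * Complex.I)⁻¹ * ∮ z in C(0, 1), f z / z ^ (j + 1))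
    (atrap : ℂ)
    (htrap : atrap = (m : ℂ)⁻¹ * ∑ k ∈ Finset.range m,
        f (Complex.exp (2 * π * Complex.I * (k + 1) / m)) *
          (Complex.exp (2 * π * Complex.I * (k + 1) / m)) ^ (-(j : ℤ)))
    (R : ℝ) (hR1 : 1 < R) (hRr : R < r) :
    ‖atrap - a‖ ≤ M * (R ^ (j : ℤ) + R ^ (-(j : ℤ))) / (R ^ m - 1) := by
  obtain ⟨n, rfl⟩ : ∃ n, m = n + 1 := ⟨m - 1, (Nat.succ_pred_eq_of_pos hm).symm⟩
  set m := n + 1 with hm_def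
  have hR0 : (0:ℝ) < R := lt_trans one_pos hR1
  have hr0 : (0:ℝ) < r := lt_trans one_pos hr
  set U := {z : ℂ | r⁻¹ < ‖z‖ ∧ ‖z‖ < r} with hU_def
  have hUopen : IsOpen U := by
    have : U = (fun z : ℂ => ‖z‖) ⁻¹' (Set.Ioo r⁻¹ r) := rfl
    rw [this]; exact isOpen_Ioo.preimage continuous_norm
  set ρ := R⁻¹ with hρ_def
  have hρ0 : (0:ℝ) < ρ := by positivity
  have hρ1 : ρ < 1 := by rw [hρ_def]; exact inv_lt_one_of_one_lt₀ hR1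
  have hρr : r⁻¹ < ρ := by rw [hρ_def]; exact inv_strictAnti₀ hR0 hRr
  have habs_sphere : ∀ {t : ℝ} (z : ℂ), z ∈ sphere (0:ℂ) t → ‖z‖ = t := by
    intro t z hz
    rw [mem_sphere_iff_norm, sub_zero] at hz
    rw [hz]
  have hmemU : ∀ z : ℂ, ρ ≤ ‖z‖ → ‖z‖ ≤ R → z ∈ U :=
    fun z h1 h2 => ⟨lt_of_lt_of_le hρr h1, lt_of_le_of_lt h2 hRr⟩
  have hannR : Metric.closedBall (0:ℂ) R \ Metric.ball 0 ρ ⊆ U := by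
    intro z hz
    rw [Set.mem_diff, Metric.mem_closedBall, Metric.mem_ball, dist_zero_right, not_lt] at hz
    exact hmemU z hz.2 hz.1
  have hann1 : Metric.closedBall (0:ℂ) R \ Metric.ball 0 1 ⊆ U := by
    intro z hz
    rw [Set.mem_diff, Metric.mem_closedBall, Metric.mem_ball, dist_zero_right, not_lt] at hz
    exact hmemU z (hρ1.le.trans hz.2) hz.1
  have h0U : ∀ z ∈ U, z ≠ 0 := by
    intro z hz h
    rw [hU_def, Set.mem_setOf_eq, h, norm_zero] at hz
    have : (0:ℝ) < r⁻¹ := by positivity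
    exact absurd hz.1 this.not_gt
  set g := fun z : ℂ => f z * z ^ (-(j:ℤ)) with hg_def
  have hg : DifferentiableOn ℂ g U := fun z hz =>
    ((hf z hz).mul ((differentiableAt_zpow.mpr (Or.inl (h0U z hz))).differentiableWithinAt))
  set ζ := Complex.exp (2*π*Complex.I/m) with hζ_def
  have hexp : ∀ k : ℕ, Complex.exp (2 * π * Complex.I * (k + 1) / m) = ζ^(k+1) := by
    intro k
    rw [hζ_def, ← Complex.exp_nat_mul]
    congr 1
    push_cast
    ring
  have habs : ∀ k : ℕ, ‖ζ^(k+1)‖ = 1 := fun k => aux_abs_zk m k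
  have htrap' : atrap = (m:ℂ)⁻¹ * ∑ k ∈ Finset.range m, g (ζ^(k+1)) := by
    rw [htrap]
    congr 1
    refine Finset.sum_congr rfl fun k _ => ?_
    rw [hexp k]
  -- move a to radius R
  have hdiv : DifferentiableOn ℂ (fun z => f z / z ^ (j+1)) U := fun z hz =>
    (hf z hz).div (differentiableAt_pow (j+1)).differentiableWithinAt
      (pow_ne_zero _ (h0U z hz))
  have haR : a = (2 * π * Complex.I)⁻¹ * ∮ z in C(0, R), f z / z ^ (j + 1) := by
    rw [haj]
    congr 1
    refine (Complex.circleIntegral_eq_of_differentiable_on_annulus_off_countable one_pos hR1.le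
      Set.countable_empty (hdiv.continuousOn.mono hann1) fun z hz => ?_).symm
    exact hdiv.differentiableAt (hUopen.mem_nhds (hann1
      ⟨Metric.ball_subset_closedBall hz.1.1, fun h => hz.1.2 (Metric.ball_subset_closedBall h)⟩))
  -- per-k two circle formula
  have hper : ∀ k ∈ Finset.range m,
      (∮ z in C(0,R), (z - ζ^(k+1))⁻¹ * g z) - (∮ z in C(0,ρ), (z - ζ^(k+1))⁻¹ * g z)
        = 2*π*Complex.I * g (ζ^(k+1)) := fun k _ =>
    aux_two_circle g U hUopen hg ρ R hρ0 (hρ1.trans hR1) hannR _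
      (by rw [habs k]; exact hρ1) (by rw [habs k]; exact hR1)
  have hsphR : sphere (0:ℂ) R ⊆ U := by
    intro z hz
    have h := habs_sphere z hz
    refine hmemU z ?_ ?_ <;> rw [h]
    exact (hρ1.trans hR1).le
  have hsphρ : sphere (0:ℂ) ρ ⊆ U := by
    intro z hz
    have h := habs_sphere z hz
    refine hmemU z ?_ ?_ <;> rw [h]
    exact (hρ1.trans hR1).le
  have hgcont : ∀ {t : ℝ}, sphere (0:ℂ) t ⊆ U → ContinuousOn g (sphere (0:ℂ) t) :=
    fun h => hg.continuousOn.mono h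
  have hFk_int : ∀ (t : ℝ), 0 < t → t ≠ 1 → sphere (0:ℂ) t ⊆ U → ∀ k ∈ Finset.range m,
      CircleIntegrable (fun z => (z - ζ^(k+1))⁻¹ * g z) 0 t := by
    intro t ht ht1 hsph k _
    refine ContinuousOn.circleIntegrable ht.le (ContinuousOn.mul ?_ (hgcont hsph))
    refine ContinuousOn.inv₀ (by fun_prop) fun z hz => sub_ne_zero.2 fun h => ?_
    rw [← habs_sphere z hz, h, habs k] at ht1
    exact ht1 rfl
  set K1 := fun z : ℂ => z^n/(z^m-1) * g z with hK1_def
  have hinteq : ∀ (t : ℝ), 0 < t → t ≠ 1 → sphere (0:ℂ) t ⊆ U →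
      (∮ z in C(0,t), ∑ k ∈ Finset.range m, (z - ζ^(k+1))⁻¹ * g z)
        = (m:ℂ) * ∮ z in C(0,t), K1 z := by
    intro t ht ht1 hsph
    rw [← circleIntegral.integral_const_mul]
    refine circleIntegral.integral_congr ht.le fun z hz => ?_
    have habsz : ‖z‖ = t := habs_sphere z hz
    rw [← Finset.sum_mul, aux_sum_inv m hm z (by rw [habsz]; exact ht1)]
    rw [hK1_def]
    have : m - 1 = n := rfl
    rw [this]
    ring
  have hsum : (2*π*Complex.I) * ∑ k ∈ Finset.range m, g (ζ^(k+1))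
      = (m:ℂ) * ((∮ z in C(0,R), K1 z) - ∮ z in C(0,ρ), K1 z) := by
    have h1 : ∑ k ∈ Finset.range m, (2*π*Complex.I * g (ζ^(k+1)))
        = ∑ k ∈ Finset.range m, ((∮ z in C(0,R), (z - ζ^(k+1))⁻¹ * g z)
            - ∮ z in C(0,ρ), (z - ζ^(k+1))⁻¹ * g z) :=
      Finset.sum_congr rfl fun k hk => (hper k hk).symm
    rw [Finset.mul_sum, h1, Finset.sum_sub_distrib,
      ← aux_integral_finset_sum _ _ _ _ (hFk_int R hR0 hR1.ne' hsphR),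
      ← aux_integral_finset_sum _ _ _ _ (hFk_int ρ hρ0 hρ1.ne hsphρ),
      hinteq R hR0 hR1.ne' hsphR, hinteq ρ hρ0 hρ1.ne hsphρ]
    ring
  -- collect atrap
  have h2πI : (2*(π:ℝ)*Complex.I) ≠ 0 := by
    simp [Real.pi_ne_zero, Complex.I_ne_zero]
  have hm0 : ((m:ℕ):ℂ) ≠ 0 := Nat.cast_ne_zero.2 hm.ne'
  have hatrap2 : atrap = (2*π*Complex.I)⁻¹ *
      ((∮ z in C(0,R), K1 z) - ∮ z in C(0,ρ), K1 z) := by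
    have hS : (∑ k ∈ Finset.range m, g (ζ^(k+1)))
        = (2*π*Complex.I)⁻¹ * ((m:ℂ) * ((∮ z in C(0,R), K1 z) - ∮ z in C(0,ρ), K1 z)) := by
      rw [← hsum]
      field_simp
    rw [htrap', hS]
    field_simp
  -- nonvanishing of z^m - 1 on the two spheres
  have hzm_ne_R : ∀ z ∈ sphere (0:ℂ) R, z^m - 1 ≠ 0 := by
    intro z hz
    rw [sub_ne_zero]
    intro h
    have h1 : ‖z^m‖ = 1 := by rw [h, norm_one]
    rw [norm_pow, habs_sphere z hz] at h1
    exact absurd h1 (one_lt_pow₀ hR1 hm.ne').ne'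
  have hzm_ne_ρ : ∀ z ∈ sphere (0:ℂ) ρ, z^m - 1 ≠ 0 := by
    intro z hz
    rw [sub_ne_zero]
    intro h
    have h1 : ‖z^m‖ = 1 := by rw [h, norm_one]
    rw [norm_pow, habs_sphere z hz] at h1
    exact absurd h1 (pow_lt_one₀ hρ0.le hρ1 hm.ne').ne
  -- integrability of K1 and of f z / z^(j+1) on the circles
  have hK1intR : CircleIntegrable K1 0 R := by
    refine ContinuousOn.circleIntegrable hR0.le (ContinuousOn.mul ?_ (hgcont hsphR))
    exact ContinuousOn.div (by fun_prop) (by fun_prop) (hzm_ne_R)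
  have hK1intρ : CircleIntegrable K1 0 ρ := by
    refine ContinuousOn.circleIntegrable hρ0.le (ContinuousOn.mul ?_ (hgcont hsphρ))
    exact ContinuousOn.div (by fun_prop) (by fun_prop) (hzm_ne_ρ)
  have hfdivintR : CircleIntegrable (fun z => f z / z^(j+1)) 0 R :=
    ContinuousOn.circleIntegrable hR0.le (hdiv.continuousOn.mono hsphR)
  have hdiffeq : atrap - a = (2*π*Complex.I)⁻¹ *
      ((∮ z in C(0,R), (K1 z - f z / z^(j+1))) - ∮ z in C(0,ρ), K1 z) := by
    rw [hatrap2, haR, circleIntegral.integral_sub hK1intR hfdivintR]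
    ring
  -- positivity facts
  have hMnonneg : 0 ≤ M := by
    refine le_trans (norm_nonneg (f 1)) (hM 1 ?_ ?_)
    · rw [norm_one]; exact inv_lt_one_of_one_lt₀ hr
    · rw [norm_one]; exact hr
  have hRm1 : (0:ℝ) < R^m - 1 := sub_pos.2 (one_lt_pow₀ hR1 hm.ne')
  have hρm1 : (0:ℝ) < 1 - ρ^m := sub_pos.2 (pow_lt_one₀ hρ0.le hρ1 hm.ne')
  -- pointwise bound on the outer circle
  have hBR : ∀ z ∈ sphere (0:ℂ) R, ‖K1 z - f z / z^(j+1)‖ ≤ M / (R^(j+1) * (R^m - 1)) := by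
    intro z hz
    have habsz := habs_sphere z hz
    have hz0 : z ≠ 0 := by
      intro h
      rw [h, norm_zero] at habsz
      exact hR0.ne habsz
    have hzm := hzm_ne_R z hz
    have hMz : ‖f z‖ ≤ M := by
      refine hM z ?_ ?_ <;> rw [habsz]
      · exact lt_trans (inv_lt_one_of_one_lt₀ hr) hR1
      · exact hRr
    have hident : K1 z - f z / z^(j+1) = f z / (z^(j+1) * (z^m - 1)) := by
      simp only [hK1_def, hg_def, zpow_neg, zpow_natCast]
      rw [hm_def] at hzm ⊢
      field_simp
      ring
    rw [hident, norm_div, norm_mul, norm_pow, habsz]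
    have hlow : R^m - 1 ≤ ‖z^m - 1‖ := by
      calc R^m - 1 = ‖z^m‖ - ‖(1:ℂ)‖ := by
            rw [norm_one, norm_pow, habsz]
          _ ≤ ‖z^m - 1‖ := norm_sub_norm_le _ _
          _ = ‖z^m - 1‖ := rfl
    gcongr
  -- pointwise bound on the inner circle
  have hBρ : ∀ z ∈ sphere (0:ℂ) ρ, ‖K1 z‖ ≤ M * ρ^n / (ρ^j * (1 - ρ^m)) := by
    intro z hz
    have habsz := habs_sphere z hz
    have hMz : ‖f z‖ ≤ M := by
      refine hM z ?_ ?_ <;> rw [habsz]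
      · exact hρr
      · exact lt_trans (hρ1.trans hR1) hRr
    have hlow : 1 - ρ^m ≤ ‖z^m - 1‖ := by
      calc 1 - ρ^m = ‖(1:ℂ)‖ - ‖z^m‖ := by
            rw [norm_one, norm_pow, habsz]
          _ ≤ ‖(1:ℂ) - z^m‖ := norm_sub_norm_le _ _
          _ = ‖z^m - 1‖ := norm_sub_rev _ _
          _ = ‖z^m - 1‖ := rfl
    have : ‖K1 z‖ = ρ^n / ‖z^m - 1‖ * (‖f z‖ / ρ^j) := by
      simp only [hK1_def, hg_def, zpow_neg, zpow_natCast]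
      rw [norm_mul, norm_mul, norm_div, norm_inv, norm_pow, norm_pow, habsz]
      ring
    rw [this]
    calc ρ^n / ‖z^m - 1‖ * (‖f z‖ / ρ^j)
        ≤ ρ^n / (1 - ρ^m) * (M / ρ^j) := by
          gcongr
      _ = M * ρ^n / (ρ^j * (1 - ρ^m)) := by
          rw [div_mul_div_comm, mul_comm (ρ^n) M, mul_comm (1-ρ^m) (ρ^j)]
  have hnormR : ‖∮ z in C(0,R), (K1 z - f z / z^(j+1))‖
      ≤ 2*π*R * (M / (R^(j+1) * (R^m - 1))) :=
    circleIntegral.norm_integral_le_of_norm_le_const hR0.le hBR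
  have hnormρ : ‖∮ z in C(0,ρ), K1 z‖ ≤ 2*π*ρ * (M * ρ^n / (ρ^j * (1 - ρ^m))) :=
    circleIntegral.norm_integral_le_of_norm_le_const hρ0.le hBρ
  have habs2πI : ‖2*(π:ℂ)*Complex.I‖ = 2*π := by
    simp [Complex.norm_I, Complex.norm_real, _root_.abs_of_pos Real.pi_pos]
  have hπpos : (0:ℝ) < 2*π := by positivity
  calc ‖atrap - a‖
      = (2*π)⁻¹ * ‖(∮ z in C(0,R), (K1 z - f z / z^(j+1))) - ∮ z in C(0,ρ), K1 z‖ := by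
        rw [hdiffeq, norm_mul, norm_inv, habs2πI]
    _ ≤ (2*π)⁻¹ * (‖∮ z in C(0,R), (K1 z - f z / z^(j+1))‖ + ‖∮ z in C(0,ρ), K1 z‖) := by
        gcongr
        exact norm_sub_le _ _
    _ ≤ (2*π)⁻¹ * (2*π*R * (M / (R^(j+1) * (R^m - 1))) + 2*π*ρ * (M * ρ^n / (ρ^j * (1 - ρ^m)))) := by
        gcongr
    _ = R * (M / (R^(j+1) * (R^m - 1))) + ρ * (M * ρ^n / (ρ^j * (1 - ρ^m))) := by
        field_simp
    _ = M * (R ^ (j : ℤ) + R ^ (-(j : ℤ))) / (R ^ m - 1) := by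
        rw [zpow_natCast, zpow_neg, zpow_natCast, hρ_def, hm_def] at *
        rw [hm_def]
        have hRm0 : R^(n+1) - 1 ≠ 0 := by rw [hm_def] at hRm1; exact hRm1.ne'
        have hρm0 : 1 - (R⁻¹)^(n+1) ≠ 0 := by rw [hm_def, hρ_def] at hρm1; exact hρm1.ne'
        have hR0' : R ≠ 0 := hR0.ne'
        rw [inv_pow, inv_pow, inv_pow]
        have h1 : (1:ℝ) - (R^(n+1))⁻¹ = (R^(n+1) - 1) / R^(n+1) := by
          rw [eq_div_iff (pow_ne_zero _ hR0'), sub_mul, inv_mul_cancel₀ (pow_ne_zero _ hR0'), one_mul]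
        rw [h1]
        field_simp
        ring

open Metric Real in
theorem trapezoidal_rule_taylor_coeff_error (f : ℂ → ℂ) (r M : ℝ) (hr : 1 < r)
    (hf : DifferentiableOn ℂ f {z : ℂ | r⁻¹ < ‖z‖ ∧ ‖z‖ < r})
    (hM : ∀ z : ℂ, r⁻¹ < ‖z‖ → ‖z‖ < r → ‖f z‖ ≤ M)
    (j m : ℕ) (hm : 0 < m)
    (a : ℂ)
    (haj : a = (2 * π * Complex.I)⁻¹ * ∮ z in C(0, 1), f z / z ^ (j + 1))
    (atrap : ℂ)
    (htrap : atrap = (m : ℂ)⁻¹ * ∑ k ∈ Finset.range m,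
        f (Complex.exp (2 * π * Complex.I * (k + 1) / m)) *
          (Complex.exp (2 * π * Complex.I * (k + 1) / m)) ^ (-(j : ℤ))) :
    ‖atrap - a‖ ≤ M * (r ^ (j : ℤ) + r ^ (-(j : ℤ))) / (r ^ m - 1) := by
  have hr0 : (0:ℝ) < r := lt_trans one_pos hr
  set φ : ℝ → ℝ := fun R => M * (R ^ (j:ℤ) + R ^ (-(j:ℤ))) / (R^m - 1) with hφ_def
  have key : ∀ R ∈ Set.Ioo (1:ℝ) r, ‖atrap - a‖ ≤ φ R := fun R hR =>
    aux_key f r M hr hf hM j m hm a haj atrap htrap R hR.1 hR.2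
  have hcont : ContinuousAt φ r := by
    refine ContinuousAt.div (ContinuousAt.mul continuousAt_const (ContinuousAt.add ?_ ?_))
      (by fun_prop) ?_
    · exact continuousAt_zpow₀ r (j:ℤ) (Or.inl hr0.ne')
    · exact continuousAt_zpow₀ r (-(j:ℤ)) (Or.inl hr0.ne')
    · exact (sub_pos.2 (one_lt_pow₀ hr hm.ne')).ne'
  have hne : (nhdsWithin r (Set.Ioo 1 r)).NeBot := right_nhdsWithin_Ioo_neBot hr
  have htend : Filter.Tendsto φ (nhdsWithin r (Set.Ioo 1 r)) (nhds (φ r)) :=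
    (hcont.continuousWithinAt).tendsto
  exact ge_of_tendsto htend (eventually_mem_nhdsWithin.mono key)
end

section
/- Let f be analytic on the closed disk {z : |z| ≤ R} for some R > 1 and let p be the polynomial interpolant of f of degree m−1 at the m-th roots of unity z_k = e^{2πik/m}. Then for 1 < ρ < R there exists a constant C (depending on f and ρ but not m) such that |p(z) − f(z)| ≤ C ρ^{-m} for all z with |z| ≤ 1. -/
private lemma tsum_split_residues {g : ℕ → ℂ} (hg : Summable g) (m : ℕ) (hm : 0 < m) :
    ∑' n, g n = ∑ j ∈ Finset.range m, ∑' l, g (l * m + j) := by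
  haveI : NeZero m := ⟨hm.ne'⟩
  have hinj : ∀ j : ℕ, Function.Injective (fun l : ℕ => l * m + j) := by
    intro j l₁ l₂ h
    simp only [add_left_inj] at h
    exact Nat.eq_of_mul_eq_mul_right hm h
  have e := (Nat.divModEquiv m).symm
  have h1 : ∑' n, g n = ∑' p : ℕ × Fin m, g ((Nat.divModEquiv m).symm p) :=
    ((Nat.divModEquiv m).symm.tsum_eq g).symm
  have hsumm : Summable (fun p : ℕ × Fin m => g ((Nat.divModEquiv m).symm p)) :=
    (Nat.divModEquiv m).symm.summable_iff.2 hg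
  rw [h1, Summable.tsum_prod' hsumm (fun l => Summable.of_finite)]
  simp only [Nat.divModEquiv_symm_apply]
  have h2 : ∀ l : ℕ, ∑' j : Fin m, g (l * m + (j : ℕ)) = ∑ j : Fin m, g (l * m + (j : ℕ)) :=
    fun l => tsum_fintype _
  calc ∑' (l : ℕ) (j : Fin m), g (l * m + (j : ℕ))
      = ∑' l : ℕ, ∑ j : Fin m, g (l * m + (j : ℕ)) := by
        exact tsum_congr h2
    _ = ∑ j : Fin m, ∑' l : ℕ, g (l * m + (j : ℕ)) := by
        refine Summable.tsum_finsetSum fun j _ => hg.comp_injective (hinj j)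
    _ = ∑ j ∈ Finset.range m, ∑' l, g (l * m + j) := by
        exact Fin.sum_univ_eq_sum_range (fun j => ∑' l, g (l * m + j)) m

open Metric Real in
theorem interpolation_at_roots_of_unity_error (f : ℂ → ℂ) (R : ℝ) (hR : 1 < R)
    (hf : DifferentiableOn ℂ f (closedBall (0 : ℂ) R))
    (ρ : ℝ) (hρ1 : 1 < ρ) (hρR : ρ < R) :
    ∃ C : ℝ, ∀ m : ℕ, 0 < m → ∀ p : Polynomial ℂ, p.natDegree < m →
      (∀ k ∈ Finset.range m,
        p.eval (Complex.exp (2 * π * Complex.I * (k + 1) / m)) =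
          f (Complex.exp (2 * π * Complex.I * (k + 1) / m))) →
      ∀ z : ℂ, ‖z‖ ≤ 1 →
        ‖p.eval z - f z‖ ≤ C * ρ ^ (-(m : ℤ)) := by
  obtain ⟨r, hρr, hrR⟩ : ∃ r : ℝ, ρ < r ∧ r < R := ⟨(ρ + R) / 2, by linarith, by linarith⟩
  have hr1 : 1 < r := hρ1.trans hρr
  have hr0 : 0 < r := by linarith
  lift R to NNReal using by linarith with R' hR'
  have hR'0 : 0 < R' := by
    have : (0 : ℝ) < R' := by exact_mod_cast (by linarith : (0:ℝ) < (R' : ℝ))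
    exact_mod_cast this
  have hP := hf.hasFPowerSeriesOnBall hR'0
  set P := cauchyPowerSeries f 0 R' with hPdef
  set a : ℕ → ℂ := fun n => P.coeff n with ha_def
  -- power series expansion on the ball
  have hsum : ∀ z : ℂ, ‖z‖ < (R' : ℝ) → HasSum (fun n => a n * z ^ n) (f z) := by
    intro z hz
    have hmem : z ∈ Metric.eball (0 : ℂ) R' := by
      rw [Metric.emetric_ball_nnreal]
      simpa [Metric.mem_ball, dist_zero_right] using hz
    have h := hP.hasSum hmem
    simp only [zero_add] at h
    have heq : (fun n => P n fun _ => z) = fun n => a n * z ^ n := by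
      funext n
      rw [P.apply_eq_pow_smul_coeff, smul_eq_mul, ha_def]
      ring
    rwa [heq] at h
  -- coefficient bounds
  obtain ⟨M, hM0, hM⟩ : ∃ C > 0, ∀ n, ‖P n‖ * r ^ n ≤ C := by
    have hlt : (r.toNNReal : ENNReal) < P.radius := by
      refine lt_of_lt_of_le ?_ hP.r_le
      rw [ENNReal.coe_lt_coe, ← NNReal.coe_lt_coe, Real.coe_toNNReal r hr0.le]
      exact hrR
    obtain ⟨C, hC0, hC⟩ := P.norm_mul_pow_le_of_lt_radius hlt
    refine ⟨C, hC0, fun n => ?_⟩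
    have h := hC n
    rwa [Real.coe_toNNReal r hr0.le] at h
  set u : ℝ := r⁻¹ with hu_def
  have hu0 : 0 < u := inv_pos.2 hr0
  have hu1 : u < 1 := inv_lt_one_of_one_lt₀ hr1
  have ha_bound : ∀ n, ‖a n‖ ≤ M * u ^ n := by
    intro n
    have h1 := hM n
    rw [P.norm_apply_eq_norm_coef] at h1
    have h2 : (0:ℝ) < r ^ n := pow_pos hr0 n
    rw [hu_def, inv_pow, ← div_eq_mul_inv, le_div_iff₀ h2]
    exact h1
  have h1u : 0 < 1 - u := by linarith
  refine ⟨2 * M * ((1 - u)⁻¹) ^ 2, ?_⟩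
  intro m hm p hdeg hinterp
  haveI : NeZero m := ⟨hm.ne'⟩
  have hm0C : (m : ℂ) ≠ 0 := Nat.cast_ne_zero.mpr hm.ne'
  -- nodes
  set ζ : ℂ := Complex.exp (2 * π * Complex.I / m) with hζ
  have hζprim : IsPrimitiveRoot ζ m := Complex.isPrimitiveRoot_exp m hm.ne'
  have hζm : ζ ^ m = 1 := hζprim.pow_eq_one
  have hζ0 : ζ ≠ 0 := Complex.exp_ne_zero _
  have hnode : ∀ k : ℕ, Complex.exp (2 * π * Complex.I * (k + 1) / m) = ζ ^ (k + 1) := by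
    intro k
    rw [hζ, ← Complex.exp_nat_mul]
    congr 1
    push_cast
    ring
  have hζabs : ‖ζ‖ = 1 := by
    have h : ζ = Complex.exp ((2 * π / m : ℝ) * Complex.I) := by
      rw [hζ]; congr 1; push_cast; ring
    rw [h, Complex.norm_exp_ofReal_mul_I]
  have hnodenorm : ∀ k : ℕ, ‖ζ ^ (k + 1)‖ = 1 := by
    intro k
    rw [norm_pow, hζabs, one_pow]
  have h1R : (1 : ℝ) < (R' : ℝ) := hR
  -- summability facts
  have hum : u ^ m < 1 := pow_lt_one₀ hu0.le hu1 hm.ne'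
  have hum0 : 0 ≤ u ^ m := pow_nonneg hu0.le m
  have hSb : ∀ j : ℕ, Summable (fun l : ℕ => a (l * m + j)) := by
    intro j
    refine Summable.of_norm_bounded
      ((summable_geometric_of_lt_one hum0 hum).mul_left (M * u ^ j)) ?_
    intro l
    calc ‖a (l * m + j)‖ ≤ M * u ^ (l * m + j) := ha_bound _
      _ = M * u ^ j * (u ^ m) ^ l := by
          rw [show l * m + j = j + m * l by ring, pow_add, pow_mul]
          ring
  set b : ℕ → ℂ := fun j => ∑' l : ℕ, a (l * m + j) with hb
  set q : Polynomial ℂ := ∑ j ∈ Finset.range m, Polynomial.C (b j) * Polynomial.X ^ j with hq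
  have hqeval : ∀ w : ℂ, q.eval w = ∑ j ∈ Finset.range m, b j * w ^ j := by
    intro w
    rw [hq, Polynomial.eval_finset_sum]
    exact Finset.sum_congr rfl fun j _ => by
      rw [Polynomial.eval_mul, Polynomial.eval_C, Polynomial.eval_pow, Polynomial.eval_X]
  -- splitting of f into residue classes
  have hsplit : ∀ w : ℂ, ‖w‖ < (R' : ℝ) →
      f w = ∑ j ∈ Finset.range m, ∑' l : ℕ, a (l * m + j) * w ^ (l * m + j) := by
    intro w hw
    rw [← (hsum w hw).tsum_eq]
    exact tsum_split_residues (hsum w hw).summable m hm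
  -- q interpolates f at the nodes
  have hqval : ∀ k : ℕ, q.eval (ζ ^ (k + 1)) = f (ζ ^ (k + 1)) := by
    intro k
    set w : ℂ := ζ ^ (k + 1) with hw
    have hwR : ‖w‖ < (R' : ℝ) := by rw [hw, hnodenorm k]; exact h1R
    have hwm : w ^ m = 1 := by
      rw [hw, ← pow_mul, mul_comm, pow_mul, hζm, one_pow]
    rw [hsplit w hwR, hqeval]
    refine Finset.sum_congr rfl fun j _ => ?_
    have hpow : ∀ l : ℕ, w ^ (l * m + j) = w ^ j := by
      intro l
      rw [pow_add, mul_comm l m, pow_mul, hwm, one_pow, one_mul]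
    calc b j * w ^ j = (∑' l : ℕ, a (l * m + j)) * w ^ j := by rw [hb]
      _ = ∑' l : ℕ, a (l * m + j) * w ^ j := (tsum_mul_right).symm
      _ = ∑' l : ℕ, a (l * m + j) * w ^ (l * m + j) := tsum_congr fun l => by rw [hpow l]
  -- q has degree < m
  have hqdeg : q.natDegree < m := by
    have h1 : q.natDegree ≤ m - 1 := by
      rw [hq]
      refine Polynomial.natDegree_sum_le_of_forall_le _ _ fun j hj => ?_
      have := Polynomial.natDegree_C_mul_X_pow_le (b j) j
      have hjm : j ≤ m - 1 := by
        have := Finset.mem_range.mp hj; omega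
      omega
    omega
  -- uniqueness: p = q
  have hpq : p = q := by
    have h0 : p - q = 0 := by
      refine Polynomial.eq_zero_of_natDegree_lt_card_of_eval_eq_zero (p - q)
        (f := fun k : Fin m => ζ ^ ((k : ℕ) + 1)) ?_ ?_ ?_
      · intro j k h
        have h' : ζ ^ ((j : ℕ) + 1) = ζ ^ ((k : ℕ) + 1) := h
        rw [pow_succ, pow_succ] at h'
        have h'' : ζ ^ (j : ℕ) = ζ ^ (k : ℕ) := mul_right_cancel₀ hζ0 h'
        exact Fin.ext (hζprim.pow_inj j.isLt k.isLt h'')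
      · intro k
        have hk := hinterp (k : ℕ) (Finset.mem_range.mpr k.isLt)
        rw [hnode (k : ℕ)] at hk
        rw [Polynomial.eval_sub, hk, hqval (k : ℕ), sub_self]
      · rw [Fintype.card_fin]
        exact lt_of_le_of_lt (Polynomial.natDegree_sub_le p q) (max_lt hdeg hqdeg)
    exact sub_eq_zero.mp h0
  -- final estimate
  intro z hzabs
  have hz1 : ‖z‖ ≤ 1 := by exact hzabs
  have hzR : ‖z‖ < (R' : ℝ) := lt_of_le_of_lt hz1 h1R
  rw [hpq]
  have S1 : Summable (fun n => a n * z ^ n) := (hsum z hzR).summable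
  have hinj : ∀ j : ℕ, Function.Injective (fun l : ℕ => l * m + j) := by
    intro j l₁ l₂ h
    simp only [add_left_inj] at h
    exact Nat.eq_of_mul_eq_mul_right hm h
  have S2 : ∀ j, Summable (fun l : ℕ => a (l * m + j) * z ^ (l * m + j)) :=
    fun j => S1.comp_injective (hinj j)
  have S4 : ∀ j, Summable (fun l : ℕ => a (l * m + j) * z ^ j) :=
    fun j => (hSb j).mul_right _
  have S5 : ∀ j, Summable
      (fun l : ℕ => a (l * m + j) * z ^ j - a (l * m + j) * z ^ (l * m + j)) :=
    fun j => (S4 j).sub (S2 j)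
  have hdiff : q.eval z - f z
      = ∑ j ∈ Finset.range m, ∑' l : ℕ,
          (a ((l + 1) * m + j) * z ^ j - a ((l + 1) * m + j) * z ^ ((l + 1) * m + j)) := by
    rw [hqeval, hsplit z hzR, ← Finset.sum_sub_distrib]
    refine Finset.sum_congr rfl fun j _ => ?_
    have e1 : b j * z ^ j = ∑' l : ℕ, a (l * m + j) * z ^ j := by
      rw [hb]; exact (tsum_mul_right).symm
    rw [e1, ← Summable.tsum_sub (S4 j) (S2 j), Summable.tsum_eq_zero_add (S5 j)]
    have h0 : a (0 * m + j) * z ^ j - a (0 * m + j) * z ^ (0 * m + j) = 0 := by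
      norm_num
    rw [h0, zero_add]
  rw [hdiff]
  have hbound : ∀ j ∈ Finset.range m,
      ‖∑' l : ℕ, (a ((l + 1) * m + j) * z ^ j - a ((l + 1) * m + j) * z ^ ((l + 1) * m + j))‖
        ≤ (2 * M * (1 - u)⁻¹ * u ^ m) * u ^ j := by
    intro j hj
    have hgeom : HasSum (fun l : ℕ => (2 * M * u ^ j * u ^ m) * (u ^ m) ^ l)
        ((2 * M * u ^ j * u ^ m) * (1 - u ^ m)⁻¹) :=
      (hasSum_geometric_of_lt_one hum0 hum).mul_left _
    refine le_trans (tsum_of_norm_bounded hgeom ?_) ?_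
    · intro l
      have hterm : ‖a ((l + 1) * m + j)‖ ≤ M * u ^ j * u ^ m * (u ^ m) ^ l := by
        calc ‖a ((l + 1) * m + j)‖ ≤ M * u ^ ((l + 1) * m + j) := ha_bound _
          _ = M * u ^ j * u ^ m * (u ^ m) ^ l := by
              rw [show (l + 1) * m + j = (j + m) + m * l by ring, pow_add, pow_add, pow_mul]
              ring
      have hz2 : ‖z ^ j - z ^ ((l + 1) * m + j)‖ ≤ 2 := by
        refine le_trans (norm_sub_le _ _) ?_
        have p1 : ‖z ^ j‖ ≤ 1 := by
          rw [norm_pow]; exact pow_le_one₀ (norm_nonneg z) hz1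
        have p2 : ‖z ^ ((l + 1) * m + j)‖ ≤ 1 := by
          rw [norm_pow]; exact pow_le_one₀ (norm_nonneg z) hz1
        linarith
      calc ‖a ((l + 1) * m + j) * z ^ j - a ((l + 1) * m + j) * z ^ ((l + 1) * m + j)‖
          = ‖a ((l + 1) * m + j)‖ * ‖z ^ j - z ^ ((l + 1) * m + j)‖ := by
            rw [← mul_sub, norm_mul]
        _ ≤ (M * u ^ j * u ^ m * (u ^ m) ^ l) * 2 := by
            refine mul_le_mul hterm hz2 (norm_nonneg _) ?_
            positivity
        _ = (2 * M * u ^ j * u ^ m) * (u ^ m) ^ l := by ring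
    · have h1 : (1 - u ^ m)⁻¹ ≤ (1 - u)⁻¹ := by
        apply inv_anti₀ h1u
        have : u ^ m ≤ u := pow_le_of_le_one hu0.le hu1.le hm.ne'
        linarith
      have hpos : 0 ≤ 2 * M * u ^ j * u ^ m := by positivity
      calc (2 * M * u ^ j * u ^ m) * (1 - u ^ m)⁻¹
          ≤ (2 * M * u ^ j * u ^ m) * (1 - u)⁻¹ := mul_le_mul_of_nonneg_left h1 hpos
        _ = (2 * M * (1 - u)⁻¹ * u ^ m) * u ^ j := by ring
  refine le_trans (le_trans (norm_sum_le _ _) (Finset.sum_le_sum hbound)) ?_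
  rw [← Finset.mul_sum]
  have hgs : ∑ j ∈ Finset.range m, u ^ j ≤ (1 - u)⁻¹ := by
    have hs : Summable (fun j : ℕ => u ^ j) := summable_geometric_of_lt_one hu0.le hu1
    have h := Summable.sum_le_tsum (Finset.range m) (fun i _ => pow_nonneg hu0.le i) hs
    rwa [tsum_geometric_of_lt_one hu0.le hu1] at h
  have hC0 : 0 ≤ 2 * M * (1 - u)⁻¹ * u ^ m := by positivity
  calc (2 * M * (1 - u)⁻¹ * u ^ m) * (∑ j ∈ Finset.range m, u ^ j)
      ≤ (2 * M * (1 - u)⁻¹ * u ^ m) * (1 - u)⁻¹ := mul_le_mul_of_nonneg_left hgs hC0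
    _ = (2 * M * ((1 - u)⁻¹) ^ 2) * u ^ m := by ring
    _ ≤ (2 * M * ((1 - u)⁻¹) ^ 2) * ρ ^ (-(m : ℤ)) := by
        refine mul_le_mul_of_nonneg_left ?_ (by positivity)
        rw [zpow_neg, zpow_natCast, hu_def, inv_pow]
        refine inv_anti₀ (pow_pos (by linarith : (0:ℝ) < ρ) m) ?_
        exact pow_le_pow_left₀ (by linarith) hρr.le m
end
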